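/- Let V be a finite-dimensional real representation of SL(2,ℝ) with weight decomposition for the diagonal subgroup A = {diag(eᵗ,e⁻ᵗ)}. If v ∈ V is a nonzero vector with λ^max(v) < 0 (i.e., all nonzero weight components of v have negative weight), then for every r ≠ 0, λ^max(u(r)v) > 0; i.e., u(r)v has a nonzero component of strictly positive weight. -/

import Mathlib

/-!
Write `a(t) = diag(eᵗ, e⁻ᵗ)`, `u(s) = [[1, s], [0, 1]]`. Since `a(t) u(s) a(-t) = u(e²ᵗ s)`, the
`(μ, κ)` weight block of `ρ (u (c² s))` is `c ^ (μ - κ)` times that of `ρ (u s)`. Expanding both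
sides of `u(c² s) u(s) = u((c² + 1) s)` in blocks and letting `c → 0` kills the weight-lowering
blocks of `ρ (u s)`, from the largest weight gap down; so `ρ (u s)` preserves "all weights `≥ k`",
without any continuity of `ρ`. The Weyl element `w = [[0, r], [-1/r, 0]]` negates weights and
satisfies `u(r) w u(r) = w u(-r) w`. If `u(r) v` had all weights `≤ 0`, the left side applied to
`v` would have all weights `≥ 0` and the right side all weights `≤ -1`, forcing `v = 0`.
-/

open Module Filter Topology
open Real (exp log)
open scoped MatrixGroups

theorem proj_apply_of_apply_eq_smul {K V ι : Type*} [Field K] [AddCommGroup V] [Module K V]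
    [DecidableEq ι] {π : ι → End K V} {S : Finset ι} {A : End K V} {χ : ι → K}
    (hχ : Function.Injective χ) (hsum : ∀ w, ∑ i ∈ S, π i w = w)
    (hA : ∀ i w, A (π i w) = χ i • π i w) {j : ι} {x : V} (hx : A x = χ j • x) (i : ι) :
    π i x = if i = j then x else 0 := by
  -- compare the decompositions `∑ i ∈ S, π i x` and `x` of `x` into eigenvectors of `A`
  have key : ∀ j x, A x = χ j • x →
      ∀ i ∈ insert j S, (if i ∈ S then π i x else 0) = if i = j then x else 0 := by
    intro j x hx
    refine (iSupIndep_iff_finsetSum_eq_imp_eq _).1 (A.eigenspaces_iSupIndep.comp hχ) _ _ _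
      (fun l _ => ⟨?_, ?_⟩) ?_
    · split_ifs <;> simp [hA]
    · split_ifs with h <;> simp [h, hx]
    · rw [Finset.sum_ite_mem, Finset.inter_eq_right.2 (Finset.subset_insert _ _), hsum,
        Finset.sum_ite_eq' _ _ _, if_pos (Finset.mem_insert_self _ _)]
  by_cases hi : i ∈ S
  · simpa [hi] using key j x hx i (Finset.mem_insert_of_mem hi)
  have hπi : π i x = 0 := by
    simpa [hi] using (key i _ (hA i x) i (Finset.mem_insert_self _ _)).symm
  split_ifs with hij
  · subst hij
    rw [hπi]
    simpa [hi] using key i x hx i (Finset.mem_insert_self _ _)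
  · exact hπi

theorem sum_smul_eq_sum_smul_at_zero {V ι κ : Type*} [AddCommGroup V] [Module ℝ V]
    {s : Finset ι} {t : Finset κ} {f : ι → ℝ → ℝ} {g : κ → ℝ → ℝ} {v : ι → V} {w : κ → V}
    (hf : ∀ i ∈ s, ContinuousAt (f i) 0) (hg : ∀ j ∈ t, ContinuousAt (g j) 0)
    (h : ∀ c > 0, ∑ i ∈ s, f i c • v i = ∑ j ∈ t, g j c • w j) :
    ∑ i ∈ s, f i 0 • v i = ∑ j ∈ t, g j 0 • w j := by
  rw [← sub_eq_zero, ← Module.forall_dual_apply_eq_zero_iff ℝ]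
  intro φ
  simp only [map_sub, map_sum, map_smul, smul_eq_mul, sub_eq_zero]
  have hF : Tendsto (fun c => ∑ i ∈ s, f i c * φ (v i)) (𝓝[>] 0) (𝓝 (∑ i ∈ s, f i 0 * φ (v i))) :=
    tendsto_finsetSum s (fun i hi => ((hf i hi).tendsto.mul_const _).mono_left nhdsWithin_le_nhds)
  have hG : Tendsto (fun c => ∑ j ∈ t, g j c * φ (w j)) (𝓝[>] 0) (𝓝 (∑ j ∈ t, g j 0 * φ (w j))) :=
    tendsto_finsetSum t (fun j hj => ((hg j hj).tendsto.mul_const _).mono_left nhdsWithin_le_nhds)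
  refine tendsto_nhds_unique (hF.congr' ?_) hG
  filter_upwards [self_mem_nhdsWithin] with c hc
  simpa only [map_sum, map_smul, smul_eq_mul] using congrArg φ (h c hc)

namespace SL2

noncomputable def diagExp (t : ℝ) : SL(2, ℝ) :=
  ⟨!![exp t, 0; 0, exp (-t)], by simp [Matrix.det_fin_two_of, ← Real.exp_add]⟩

def unipotent (s : ℝ) : SL(2, ℝ) :=
  ⟨!![1, s; 0, 1], by simp [Matrix.det_fin_two_of]⟩

theorem coe_diagExp (t : ℝ) : (diagExp t : Matrix (Fin 2) (Fin 2) ℝ) = !![exp t, 0; 0, exp (-t)] :=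
  rfl

theorem coe_unipotent (s : ℝ) : (unipotent s : Matrix (Fin 2) (Fin 2) ℝ) = !![1, s; 0, 1] :=
  rfl

theorem unipotent_mul_unipotent (s s' : ℝ) : unipotent s * unipotent s' = unipotent (s + s') := by
  refine Subtype.ext ?_
  simp [coe_unipotent, add_comm]

theorem diagExp_mul_unipotent_mul_diagExp_neg (t s : ℝ) :
    diagExp t * unipotent s * diagExp (-t) = unipotent (exp (2 * t) * s) := by
  refine Subtype.ext ?_
  simp [coe_unipotent, coe_diagExp, ← Real.exp_add]
  rw [two_mul, Real.exp_add]
  ring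

theorem exists_weyl {r : ℝ} (hr : r ≠ 0) : ∃ w : SL(2, ℝ),
    (∀ t, w * diagExp t = diagExp (-t) * w) ∧
      unipotent r * w * unipotent r = w * unipotent (-r) * w := by
  let w : SL(2, ℝ) := ⟨!![0, r; -r⁻¹, 0], by simp [Matrix.det_fin_two_of, hr]⟩
  have hw : (w : Matrix (Fin 2) (Fin 2) ℝ) = !![0, r; -r⁻¹, 0] := rfl
  refine ⟨w, fun t => Subtype.ext ?_, Subtype.ext ?_⟩ <;>
    simp [hw, coe_unipotent, coe_diagExp, hr, mul_comm]

end SL2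

open SL2

structure IsWeightDecomposition {V : Type*} [AddCommGroup V] [Module ℝ V]
    (ρ : Representation ℝ SL(2, ℝ) V) (π : ℤ → End ℝ V) (S : Finset ℤ) : Prop where
  sum_proj : ∀ w, ∑ l ∈ S, π l w = w
  diagExp_proj : ∀ t l w, ρ (diagExp t) (π l w) = exp (l * t) • π l w

def WeightsGE {V : Type*} [AddCommGroup V] [Module ℝ V] (π : ℤ → End ℝ V) (k : ℤ) (x : V) :
    Prop :=
  ∀ μ < k, π μ x = 0

def WeightsLE {V : Type*} [AddCommGroup V] [Module ℝ V] (π : ℤ → End ℝ V) (k : ℤ) (x : V) :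
    Prop :=
  ∀ μ > k, π μ x = 0

namespace IsWeightDecomposition

variable {V : Type*} [AddCommGroup V] [Module ℝ V] {ρ : Representation ℝ SL(2, ℝ) V}
  {π : ℤ → End ℝ V} {S : Finset ℤ}

theorem proj_apply_of_diagExp_apply (h : IsWeightDecomposition ρ π S) {ν : ℤ} {x : V}
    (hx : ρ (diagExp 1) x = exp ν • x) (μ : ℤ) : π μ x = if μ = ν then x else 0 :=
  proj_apply_of_apply_eq_smul (χ := fun l : ℤ => exp l) (Real.exp_injective.comp Int.cast_injective)
    h.sum_proj (fun l w => by simpa using h.diagExp_proj 1 l w) hx μ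

theorem proj_proj (h : IsWeightDecomposition ρ π S) (μ ν : ℤ) (w : V) :
    π μ (π ν w) = if μ = ν then π ν w else 0 :=
  h.proj_apply_of_diagExp_apply (by simpa using h.diagExp_proj 1 ν w) μ

theorem proj_eq_zero_of_notMem (h : IsWeightDecomposition ρ π S) {μ : ℤ} (hμ : μ ∉ S) (w : V) :
    π μ w = 0 := by
  rw [← h.sum_proj (π μ w)]
  exact Finset.sum_eq_zero fun l hl => by rw [h.proj_proj, if_neg (ne_of_mem_of_not_mem hl hμ)]

theorem mem_of_proj_ne_zero (h : IsWeightDecomposition ρ π S) {μ : ℤ} {w : V} (hw : π μ w ≠ 0) :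
    μ ∈ S :=
  by_contra fun hμ => hw (h.proj_eq_zero_of_notMem hμ w)

theorem proj_apply_eq_sum (h : IsWeightDecomposition ρ π S) (f : End ℝ V) (μ : ℤ) (x : V) :
    π μ (f x) = ∑ κ ∈ S, π μ (f (π κ x)) := by
  conv_lhs => rw [← h.sum_proj x]
  simp only [map_sum]

theorem proj_diagExp_apply (h : IsWeightDecomposition ρ π S) (t : ℝ) (μ : ℤ) (x : V) :
    π μ (ρ (diagExp t) x) = exp (μ * t) • π μ x := by
  rw [h.proj_apply_eq_sum, Finset.sum_eq_single μ]
  · rw [h.diagExp_proj, map_smul, h.proj_proj, if_pos rfl]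
  · intro κ _ hκ
    rw [h.diagExp_proj, map_smul, h.proj_proj, if_neg hκ.symm, smul_zero]
  · intro hμ
    simp [h.proj_eq_zero_of_notMem hμ]

theorem proj_diagExp_conj_proj (h : IsWeightDecomposition ρ π S) (g : SL(2, ℝ)) (t : ℝ) (μ ν : ℤ)
    (x : V) : π μ (ρ (diagExp t * g * diagExp (-t)) (π ν x))
      = exp ((μ - ν) * t) • π μ (ρ g (π ν x)) := by
  rw [map_mul, map_mul, End.mul_apply, End.mul_apply, h.diagExp_proj, map_smul, map_smul,
    map_smul, h.proj_diagExp_apply, smul_smul, ← Real.exp_add]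
  congr 2
  ring

theorem proj_unipotent_proj_sq_mul (h : IsWeightDecomposition ρ π S) {c : ℝ} (hc : 0 < c)
    (s : ℝ) (μ ν : ℤ) (x : V) :
    π μ (ρ (unipotent (c ^ 2 * s)) (π ν x)) = c ^ (μ - ν) • π μ (ρ (unipotent s) (π ν x)) := by
  have hc2 : c ^ 2 = exp (2 * log c) := by rw [mul_comm, Real.exp_mul, Real.exp_log hc]; norm_cast
  rw [hc2, ← diagExp_mul_unipotent_mul_diagExp_neg, h.proj_diagExp_conj_proj, ← Real.rpow_intCast,
    Real.rpow_def_of_pos hc]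
  push_cast
  ring_nf

theorem proj_unipotent_sq_mul_apply (h : IsWeightDecomposition ρ π S) {c : ℝ} (hc : 0 < c)
    (s : ℝ) (μ : ℤ) (x : V) :
    π μ (ρ (unipotent (c ^ 2 * s)) x) = ∑ κ ∈ S, c ^ (μ - κ) • π μ (ρ (unipotent s) (π κ x)) := by
  rw [h.proj_apply_eq_sum]
  simp only [h.proj_unipotent_proj_sq_mul hc]

theorem proj_apply_of_conj_neg (h : IsWeightDecomposition ρ π S) {g : SL(2, ℝ)}
    (hg : ∀ t, g * diagExp t = diagExp (-t) * g) (μ : ℤ) (x : V) :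
    π μ (ρ g x) = π μ (ρ g (π (-μ) x)) := by
  rw [h.proj_apply_eq_sum, Finset.sum_eq_single (-μ)]
  · intro κ _ hκ
    have heig : ρ (diagExp 1) (ρ g (π κ x)) = exp (-κ : ℤ) • ρ g (π κ x) := by
      rw [← End.mul_apply, ← map_mul, ← neg_neg (1 : ℝ), ← hg, map_mul, End.mul_apply,
        h.diagExp_proj, map_smul]
      push_cast
      ring_nf
    rw [h.proj_apply_of_diagExp_apply heig, if_neg (by omega)]
  · intro hμ
    rw [h.proj_eq_zero_of_notMem hμ, map_zero, map_zero]

theorem eq_zero_of_weightsGE_of_weightsLE (h : IsWeightDecomposition ρ π S) {j k : ℤ} {x : V}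
    (hjk : j < k) (hge : WeightsGE π k x) (hle : WeightsLE π j x) : x = 0 := by
  rw [← h.sum_proj x]
  exact Finset.sum_eq_zero fun l _ => (lt_or_ge l k).elim (hge l) fun hl => hle l (by omega)

theorem weightsGE_apply_of_conj_neg (h : IsWeightDecomposition ρ π S) {g : SL(2, ℝ)}
    (hg : ∀ t, g * diagExp t = diagExp (-t) * g) {k : ℤ} {x : V} (hx : WeightsLE π k x) :
    WeightsGE π (-k) (ρ g x) := fun μ hμ => by
  rw [h.proj_apply_of_conj_neg hg, hx (-μ) (by omega), map_zero, map_zero]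

theorem weightsLE_apply_of_conj_neg (h : IsWeightDecomposition ρ π S) {g : SL(2, ℝ)}
    (hg : ∀ t, g * diagExp t = diagExp (-t) * g) {k : ℤ} {x : V} (hx : WeightsGE π k x) :
    WeightsLE π (-k) (ρ g x) := fun μ hμ => by
  rw [h.proj_apply_of_conj_neg hg, hx (-μ) (by omega), map_zero, map_zero]

theorem proj_unipotent_proj_add_eq_zero (h : IsWeightDecomposition ρ π S) (s : ℝ) {k : ℤ}
    (hk : 0 < k) (hgap : ∀ μ κ, μ + k < κ → ∀ x, π μ (ρ (unipotent s) (π κ x)) = 0)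
    (μ : ℤ) (x : V) : π μ (ρ (unipotent s) (π (μ + k) x)) = 0 := by
  obtain ⟨y, rfl⟩ := (ρ.apply_bijective (unipotent s)).2 x
  by_cases hS : μ + k ∉ S
  · rw [h.proj_eq_zero_of_notMem hS, map_zero, map_zero]
  -- expand `c ^ k • π μ (ρ (u ((c ^ 2 + 1) * s)) y)` along `u (c ^ 2 * s) * u s` and along
  -- `u (√(c ^ 2 + 1) ^ 2 * s)`, then let `c → 0`
  have hexpand : ∀ c > 0,
      ∑ κ ∈ S.filter (· ≤ μ + k), c ^ (k + μ - κ) • π μ (ρ (unipotent s) (π κ (ρ (unipotent s) y)))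
        = ∑ κ ∈ S, (c ^ k * √(c ^ 2 + 1) ^ (μ - κ)) • π μ (ρ (unipotent s) (π κ y)) := by
    intro c hc
    have hsplit : ρ (unipotent (√(c ^ 2 + 1) ^ 2 * s)) y
        = ρ (unipotent (c ^ 2 * s)) (ρ (unipotent s) y) := by
      rw [Real.sq_sqrt (by positivity), add_mul, one_mul, ← unipotent_mul_unipotent, map_mul,
        End.mul_apply]
    calc _ = c ^ k • π μ (ρ (unipotent (c ^ 2 * s)) (ρ (unipotent s) y)) := by
          rw [h.proj_unipotent_sq_mul_apply hc, Finset.sum_filter, Finset.smul_sum]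
          refine Finset.sum_congr rfl fun κ _ => ?_
          split_ifs with hκ
          · rw [smul_smul, ← zpow_add₀ hc.ne']
            ring_nf
          · rw [hgap μ κ (by omega), smul_zero, smul_zero]
      _ = _ := by
          rw [← hsplit, h.proj_unipotent_sq_mul_apply (by positivity), Finset.smul_sum]
          simp only [smul_smul]
  have hlim := sum_smul_eq_sum_smul_at_zero (f := fun κ c => c ^ (k + μ - κ))
    (g := fun κ c => c ^ k * √(c ^ 2 + 1) ^ (μ - κ))
    (fun κ hκ => continuousAt_zpow₀ _ _ (Or.inr (by simp at hκ; omega)))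
    (fun κ _ => by fun_prop (disch := first | (right; omega) | (left; simp))) hexpand
  rw [Finset.sum_eq_single_of_mem (μ + k) (by simpa using hS)] at hlim
  · rw [show k + μ - (μ + k) = 0 by ring, zpow_zero, one_smul] at hlim
    simpa [zero_zpow _ hk.ne'] using hlim
  · intro κ _ hκ
    rw [zero_zpow _ (by omega), zero_smul]

theorem proj_unipotent_proj_eq_zero (h : IsWeightDecomposition ρ π S) (s : ℝ) {μ κ : ℤ}
    (hlt : μ < κ) (x : V) : π μ (ρ (unipotent s) (π κ x)) = 0 := by
  classical
  by_contra hne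
  let bad := (S ×ˢ S).filter fun p : ℤ × ℤ => p.1 < p.2 ∧ ∃ x, π p.1 (ρ (unipotent s) (π p.2 x)) ≠ 0
  have mem_bad : ∀ μ κ x, μ < κ → π μ (ρ (unipotent s) (π κ x)) ≠ 0 → (μ, κ) ∈ bad :=
    fun μ κ x hlt hne => Finset.mem_filter.2 ⟨Finset.mem_product.2 ⟨h.mem_of_proj_ne_zero hne,
      h.mem_of_proj_ne_zero fun h0 => hne (by rw [h0, map_zero, map_zero])⟩, hlt, x, hne⟩
  obtain ⟨⟨μ₀, κ₀⟩, hbad, hmax⟩ :=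
    bad.exists_max_image (fun p => p.2 - p.1) ⟨_, mem_bad μ κ x hlt hne⟩
  obtain ⟨-, hlt₀, y, hy⟩ := Finset.mem_filter.1 hbad
  refine hy ?_
  have := h.proj_unipotent_proj_add_eq_zero s (k := κ₀ - μ₀) (by omega)
    (fun μ' κ' hgap x' => by_contra fun hne' => ?_) μ₀ y
  · simpa using this
  · have := hmax _ (mem_bad μ' κ' x' (by omega) hne')
    simp only at this
    omega

theorem weightsGE_unipotent_apply (h : IsWeightDecomposition ρ π S) (s : ℝ) {k : ℤ} {x : V}
    (hx : WeightsGE π k x) : WeightsGE π k (ρ (unipotent s) x) := fun μ hμ => by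
  rw [h.proj_apply_eq_sum]
  refine Finset.sum_eq_zero fun κ _ => ?_
  rcases lt_or_ge κ k with hκ | hκ
  · rw [hx κ hκ, map_zero, map_zero]
  · exact h.proj_unipotent_proj_eq_zero s (by omega) x

end IsWeightDecomposition

open IsWeightDecomposition in
theorem stmt3_general (V : Type*) [AddCommGroup V] [Module ℝ V]
    (ρ : Matrix.SpecialLinearGroup (Fin 2) ℝ →* (V →ₗ[ℝ] V))
    (π : ℤ → (V →ₗ[ℝ] V)) (S : Finset ℤ)
    (hdecomp : ∀ w : V, ∑ lam ∈ S, π lam w = w)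
    (a : ℝ → Matrix.SpecialLinearGroup (Fin 2) ℝ)
    (ha : ∀ t, (a t : Matrix (Fin 2) (Fin 2) ℝ) = !![Real.exp t, 0; 0, Real.exp (-t)])
    (hweight : ∀ (t : ℝ) (lam : ℤ) (w : V),
      ρ (a t) (π lam w) = Real.exp ((lam : ℝ) * t) • π lam w)
    (v : V) (hv : v ≠ 0) (hneg : ∀ lam : ℤ, 0 ≤ lam → π lam v = 0)
    (r : ℝ) (hr : r ≠ 0)
    (u : Matrix.SpecialLinearGroup (Fin 2) ℝ)
    (hu : (u : Matrix (Fin 2) (Fin 2) ℝ) = !![1, r; 0, 1]) :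
    ∃ μ : ℤ, 0 < μ ∧ π μ (ρ u v) ≠ 0 := by
  obtain rfl : a = diagExp := funext fun t => Subtype.ext (ha t)
  obtain rfl : u = unipotent r := Subtype.ext hu
  have h : IsWeightDecomposition ρ π S := ⟨hdecomp, hweight⟩
  by_contra! hpos
  obtain ⟨w, hw, hbraid⟩ := exists_weyl hr
  have hge : WeightsGE π 0 (ρ (unipotent r * w * unipotent r) v) := by
    rw [map_mul, map_mul, End.mul_apply, End.mul_apply]
    exact h.weightsGE_unipotent_apply r (h.weightsGE_apply_of_conj_neg hw (k := 0) hpos)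
  have hle : WeightsLE π (-1) (ρ (w * unipotent (-r) * w) v) := by
    rw [map_mul, map_mul, End.mul_apply, End.mul_apply]
    refine h.weightsLE_apply_of_conj_neg hw (h.weightsGE_unipotent_apply (-r) ?_)
    exact h.weightsGE_apply_of_conj_neg hw (k := -1) fun μ hμ => hneg μ (by omega)
  rw [← hbraid] at hle
  have h0 := h.eq_zero_of_weightsGE_of_weightsLE (by norm_num) hge hle
  exact hv ((Representation.apply_bijective ρ _).injective (h0.trans (map_zero _).symm))

/-- If all nonzero weight components of a nonzero vector `v` have negative weight, then for
every `r ≠ 0`, `u(r)v` has a nonzero component of strictly positive weight. -/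
theorem stmt3 (V : Type*) [AddCommGroup V] [Module ℝ V] [FiniteDimensional ℝ V]
    (ρ : Matrix.SpecialLinearGroup (Fin 2) ℝ →* (V →ₗ[ℝ] V))
    (π : ℤ → (V →ₗ[ℝ] V)) (S : Finset ℤ)
    (hdecomp : ∀ w : V, ∑ lam ∈ S, π lam w = w)
    (a : ℝ → Matrix.SpecialLinearGroup (Fin 2) ℝ)
    (ha : ∀ t, (a t : Matrix (Fin 2) (Fin 2) ℝ) = !![Real.exp t, 0; 0, Real.exp (-t)])
    (hweight : ∀ (t : ℝ) (lam : ℤ) (w : V),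
      ρ (a t) (π lam w) = Real.exp ((lam : ℝ) * t) • π lam w)
    (v : V) (hv : v ≠ 0) (hneg : ∀ lam : ℤ, 0 ≤ lam → π lam v = 0)
    (r : ℝ) (hr : r ≠ 0)
    (u : Matrix.SpecialLinearGroup (Fin 2) ℝ)
    (hu : (u : Matrix (Fin 2) (Fin 2) ℝ) = !![1, r; 0, 1]) :
    ∃ μ : ℤ, 0 < μ ∧ π μ (ρ u v) ≠ 0 :=
  stmt3_general V ρ π S hdecomp a ha hweight v hv hneg r hr u hu
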